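/- If i ∈ M(α₁,α₂) is cyclically irreducible, then the polynomial P₁^i(u)·P₂^i(u) has no repeated roots, i.e., the partial sums α_{i₁} + ⋯ + α_{i_k} for k = 1,…,N are pairwise distinct. -/
import Mathlib


open Polynomial

def wsum (α₁ α₂ : ℂ) (l : List Bool) : ℂ :=
  (l.map (fun b => if b then α₂ else α₁)).sum

noncomputable def Pfun (α₁ α₂ : ℂ) (mb : Bool) (l : List Bool) : Polynomial ℂ :=
  ∏ k ∈ Finset.range l.length,
    if l.getD k false = mb then 1
    else (Polynomial.X - Polynomial.C (wsum α₁ α₂ (l.take (k + 1))))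

def CycRed (α₁ α₂ : ℂ) (l : List Bool) : Prop :=
  ∃ (k : ℕ) (a b : List Bool), a ≠ [] ∧ b ≠ [] ∧
    wsum α₁ α₂ a = 0 ∧ wsum α₁ α₂ b = 0 ∧ l.rotate k = a ++ b

lemma wsum_append (α₁ α₂ : ℂ) (a b : List Bool) :
    wsum α₁ α₂ (a ++ b) = wsum α₁ α₂ a + wsum α₁ α₂ b := by
  simp [wsum]

lemma distinct_of_irr (α₁ α₂ : ℂ) (l : List Bool) (hl : l ≠ [])
    (hM : wsum α₁ α₂ l = 0) (hirr : ¬ CycRed α₁ α₂ l) :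
    ∀ j k : ℕ, j < l.length → k < l.length →
      wsum α₁ α₂ (l.take (j + 1)) = wsum α₁ α₂ (l.take (k + 1)) → j = k := by
  -- wlog-style: prove for j < k
  have key : ∀ j k : ℕ, j < k → k < l.length →
      wsum α₁ α₂ (l.take (j + 1)) = wsum α₁ α₂ (l.take (k + 1)) → False := by
    intro j k hjk hk heq
    set a : List Bool := (l.take (k + 1)).drop (j + 1) with ha
    set b : List Bool := l.drop (k + 1) ++ l.take (j + 1) with hb
    have hsplit : l.take (k + 1) = l.take (j + 1) ++ a := by
      conv_lhs => rw [← List.take_append_drop (j + 1) (l.take (k + 1))]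
      rw [List.take_take, Nat.min_eq_left (by omega : j + 1 ≤ k + 1)]
    have hlenk : (l.take (k + 1)).length = k + 1 := by
      rw [List.length_take]; omega
    have hane : a ≠ [] := by
      have : a.length = k - j := by rw [ha, List.length_drop, hlenk]; omega
      intro h; rw [h] at this; simp at this; omega
    have htne : l.take (j + 1) ≠ [] := by
      have : (l.take (j + 1)).length = j + 1 := by
        rw [List.length_take]; omega
      intro h; rw [h] at this; simp at this
    have hbne : b ≠ [] := by
      simp [hb, htne]
    have hwa : wsum α₁ α₂ a = 0 := by
      have h2 := wsum_append α₁ α₂ (l.take (j + 1)) a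
      rw [← hsplit] at h2
      linear_combination - h2 - heq
    have hldecomp : l = l.take (k + 1) ++ l.drop (k + 1) :=
      (List.take_append_drop _ _).symm
    have hwl : wsum α₁ α₂ (l.take (k + 1)) + wsum α₁ α₂ (l.drop (k + 1)) = 0 := by
      rw [← wsum_append, ← hldecomp, hM]
    have hwb : wsum α₁ α₂ b = 0 := by
      rw [hb, wsum_append, heq]
      linear_combination hwl
    have hdrop : l.drop (j + 1) = a ++ l.drop (k + 1) := by
      conv_lhs => rw [hldecomp]
      rw [List.drop_append, hlenk]
      have : j + 1 - (k + 1) = 0 := by omega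
      rw [this, List.drop_zero, ha]
    have hrot : l.rotate (j + 1) = a ++ b := by
      rw [List.rotate_eq_drop_append_take (by omega : j + 1 ≤ l.length),
        hdrop, hb, List.append_assoc]
    exact hirr ⟨j + 1, a, b, hane, hbne, hwa, hwb, hrot⟩
  intro j k hj hk heq
  rcases lt_trichotomy j k with h | h | h
  · exact absurd (key j k h hk heq) id
  · exact h
  · exact absurd (key k j h hj heq.symm) id

theorem stmt14 (α₁ α₂ : ℂ) (hα₁ : α₁ ≠ 0) (hα₂ : α₂ ≠ 0)
    (l : List Bool) (hl : l ≠ []) (hM : wsum α₁ α₂ l = 0)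
    (hirr : ¬ CycRed α₁ α₂ l) :
    Squarefree (Pfun α₁ α₂ false l * Pfun α₁ α₂ true l) ∧
    ∀ j k : ℕ, j < l.length → k < l.length →
      wsum α₁ α₂ (l.take (j + 1)) = wsum α₁ α₂ (l.take (k + 1)) → j = k := by
  have hdist := distinct_of_irr α₁ α₂ l hl hM hirr
  refine ⟨?_, hdist⟩
  have hprod : Pfun α₁ α₂ false l * Pfun α₁ α₂ true l =
      ∏ k ∈ Finset.range l.length,
        (Polynomial.X - Polynomial.C (wsum α₁ α₂ (l.take (k + 1)))) := by
    rw [Pfun, Pfun, ← Finset.prod_mul_distrib]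
    apply Finset.prod_congr rfl
    intro k _
    cases h : l.getD k false <;> simp [h]
  rw [hprod]
  apply Polynomial.Separable.squarefree
  rw [Polynomial.separable_prod_X_sub_C_iff']
  intro x hx y hy hxy
  exact hdist x y (Finset.mem_range.mp hx) (Finset.mem_range.mp hy) hxy
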